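/- Let R be a ring and T a left denominator set of R such that every element t ∈ T is weakly left regular (i.e., for every S ∈ max.Den_l(R), the image t/1 in S⁻¹R is left regular). Then T ⊆ S for every maximal left denominator set S of R; hence T ⊆ L^s_l(R) = ⋂_{S ∈ max.Den_l(R)} S. -/

import Mathlib

/-- A left Ore set in a ring `R`: a multiplicative subset (`1 ∈ S`, `0 ∉ S`,
closed under multiplication) satisfying the left Ore condition. -/
def IsLeftOreSet (R : Type*) [Ring R] (S : Set R) : Prop :=
  (1 : R) ∈ S ∧ (0 : R) ∉ S ∧ (∀ s ∈ S, ∀ t ∈ S, s * t ∈ S) ∧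
    ∀ (r : R), ∀ s ∈ S, ∃ s' ∈ S, ∃ r' : R, s' * r = r' * s

/-- A left denominator set: a left Ore set such that `r * s = 0` implies
`t * r = 0` for some `t ∈ S`. -/
def IsLeftDenSet (R : Type*) [Ring R] (S : Set R) : Prop :=
  IsLeftOreSet R S ∧ ∀ (r : R), ∀ s ∈ S, r * s = 0 → ∃ t ∈ S, t * r = 0

/-- `ass(S) = {r ∈ R | s r = 0 for some s ∈ S}`. -/
def assSet (R : Type*) [Ring R] (S : Set R) : Set R :=
  {r : R | ∃ s ∈ S, s * r = 0}

/-- A maximal left denominator set of `R`. -/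
def IsMaxLeftDenSet (R : Type*) [Ring R] (S : Set R) : Prop :=
  IsLeftDenSet R S ∧ ∀ T : Set R, IsLeftDenSet R T → S ⊆ T → T = S

/-- The set `L^s_l(R)` of strongly left localizable elements: the intersection of
all maximal left denominator sets of `R`. -/
def stronglyLocalizable (R : Type*) [Ring R] : Set R :=
  {r : R | ∀ S : Set R, IsMaxLeftDenSet R S → r ∈ S}

/-- `T_l(R)`: the union of all left denominator sets contained in `L^s_l(R)`
(the largest strong left denominator set). -/
def Tl (R : Type*) [Ring R] : Set R :=
  ⋃₀ {S : Set R | IsLeftDenSet R S ∧ S ⊆ stronglyLocalizable R}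

/-- The left localization radical `l_R = ⋂_{S ∈ max.Den_l(R)} ass(S)`. -/
def lRad (R : Type*) [Ring R] : Set R :=
  {r : R | ∀ S : Set R, IsMaxLeftDenSet R S → r ∈ assSet R S}

/-- `f : R →+* Q` is a left Ore localization of `R` at `S`: elements of `S` become
units, every element of `Q` is of the form `s⁻¹ r`, and `ker f = ass(S)`. -/
def IsLeftLocalization (R : Type*) [Ring R] {Q : Type*} [Ring Q]
    (S : Set R) (f : R →+* Q) : Prop :=
  (∀ s ∈ S, IsUnit (f s)) ∧
  (∀ q : Q, ∃ s ∈ S, ∃ r : R, ∃ u : Qˣ, (u : Q) = f s ∧ q = (↑u⁻¹ : Q) * f r) ∧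
  (∀ r : R, f r = 0 ↔ r ∈ assSet R S)

/-!
Fix a maximal left denominator set `S`. The submonoid `ST` generated by `S ∪ T` inherits the
left Ore condition and left reversibility from its generators, so it is a left denominator set
as soon as `0 ∉ ST`. In a localization `S⁻¹R` the images of elements of `S` are units and those
of elements of `T` are left regular by hypothesis (in the paper's sense: they lie in Mathlib's
`nonZeroDivisorsRight`), so every element of `ST` maps to a non-zero divisor; as `S⁻¹R ≠ 0`, this rules out `0 ∈ ST`. Maximality of `S` then forces `ST = S ⊇ T`.
-/

namespace IsLeftDenSet

universe u

variable {R : Type u} [Ring R] {S : Set R}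

def toSubmonoid (hS : IsLeftDenSet R S) : Submonoid R where
  carrier := S
  one_mem' := hS.1.1
  mul_mem' ha hb := hS.1.2.2.1 _ ha _ hb

theorem nonempty_oreSet (hS : IsLeftDenSet R S) :
    Nonempty (OreLocalization.OreSet hS.toSubmonoid) :=
  OreLocalization.nonempty_oreSet_iff.mpr
    ⟨fun r₁ r₂ s h => by
      obtain ⟨t, ht, h0⟩ := hS.2 (r₁ - r₂) s s.2 (by rw [sub_mul, h, sub_self])
      exact ⟨⟨t, ht⟩, sub_eq_zero.mp (by rw [← mul_sub, h0])⟩,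
    fun r s => by
      obtain ⟨s', hs', r', h⟩ := hS.1.2.2.2 r s s.2
      exact ⟨r', ⟨s', hs'⟩, h⟩⟩

theorem exists_isLeftLocalization (hS : IsLeftDenSet R S) :
    ∃ (Q : Type u) (_ : Ring Q) (f : R →+* Q), IsLeftLocalization R S f := by
  let := Classical.choice hS.nonempty_oreSet
  refine ⟨OreLocalization hS.toSubmonoid R, inferInstance, OreLocalization.numeratorRingHom,
    fun s hs => OreLocalization.numerator_isUnit (⟨s, hs⟩ : hS.toSubmonoid), fun q => ?_,
    fun r => ?_⟩
  · induction q using OreLocalization.ind with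
    | _ r s =>
      refine ⟨s, s.2, r, OreLocalization.numeratorUnit s, rfl, ?_⟩
      change r /ₒ s = ((1 : R) /ₒ s) * (r /ₒ 1)
      rw [OreLocalization.one_div_mul, one_mul]
  · change r /ₒ 1 = 0 ↔ _
    rw [← OreLocalization.zero_oreDiv' 1, OreLocalization.oreDiv_eq_iff]
    constructor
    · rintro ⟨u, v, h0, h1⟩
      simp only [smul_zero, smul_eq_mul, OneMemClass.coe_one, mul_one] at h0 h1
      exact ⟨u, u.2, h1 ▸ h0.symm⟩
    · rintro ⟨s, hs, hsr⟩
      exact ⟨⟨s, hs⟩, s, by simpa [Submonoid.smul_def] using hsr.symm, by simp⟩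

end IsLeftDenSet

namespace Submonoid

variable {R : Type*} [Ring R] {M : Submonoid R} {G : Set R}

theorem exists_leftOre_of_mem_closure
    (hG : ∀ g ∈ G, ∀ r : R, ∃ p ∈ M, ∃ r' : R, p * r = r' * g)
    {s : R} (hs : s ∈ closure G) (r : R) : ∃ p ∈ M, ∃ r' : R, p * r = r' * s := by
  induction hs using closure_induction generalizing r with
  | mem g hg => exact hG g hg r
  | one => exact ⟨1, M.one_mem, r, by rw [one_mul, mul_one]⟩
  | mul x y _ _ ihx ihy =>
    obtain ⟨p₁, hp₁, r₁, h₁⟩ := ihy r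
    obtain ⟨p₂, hp₂, r₂, h₂⟩ := ihx r₁
    exact ⟨p₂ * p₁, M.mul_mem hp₂ hp₁, r₂, by rw [mul_assoc, h₁, ← mul_assoc, h₂, mul_assoc]⟩

theorem exists_mul_eq_zero_of_mem_closure
    (hG : ∀ g ∈ G, ∀ r : R, r * g = 0 → ∃ p ∈ M, p * r = 0)
    {s : R} (hs : s ∈ closure G) (r : R) (hr : r * s = 0) : ∃ p ∈ M, p * r = 0 := by
  induction hs using closure_induction generalizing r with
  | mem g hg => exact hG g hg r hr
  | one => exact ⟨1, M.one_mem, by rwa [one_mul, ← mul_one r]⟩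
  | mul x y _ _ ihx ihy =>
    obtain ⟨p₁, hp₁, h₁⟩ := ihy (r * x) (by rwa [← mul_assoc] at hr)
    obtain ⟨p₂, hp₂, h₂⟩ := ihx (p₁ * r) (by rwa [mul_assoc])
    exact ⟨p₂ * p₁, M.mul_mem hp₂ hp₁, by rwa [mul_assoc]⟩

end Submonoid

variable {R : Type*} [Ring R] {S T : Set R}

theorem IsLeftDenSet.closure_union (hS : IsLeftDenSet R S) (hT : IsLeftDenSet R T)
    (h0 : (0 : R) ∉ Submonoid.closure (S ∪ T)) :
    IsLeftDenSet R (Submonoid.closure (S ∪ T)) := by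
  have mem_left {x} (hx : x ∈ S) : x ∈ Submonoid.closure (S ∪ T) :=
    Submonoid.subset_closure (Or.inl hx)
  have mem_right {x} (hx : x ∈ T) : x ∈ Submonoid.closure (S ∪ T) :=
    Submonoid.subset_closure (Or.inr hx)
  refine ⟨⟨one_mem _, h0, fun _ ha _ hb => mul_mem ha hb, fun r s hs => ?_⟩,
    fun r s hs hrs => ?_⟩
  · refine Submonoid.exists_leftOre_of_mem_closure ?_ hs r
    rintro g (hg | hg) r
    · obtain ⟨s', hs', r', h⟩ := hS.1.2.2.2 r g hg
      exact ⟨s', mem_left hs', r', h⟩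
    · obtain ⟨t', ht', r', h⟩ := hT.1.2.2.2 r g hg
      exact ⟨t', mem_right ht', r', h⟩
  · refine Submonoid.exists_mul_eq_zero_of_mem_closure ?_ hs r hrs
    rintro g (hg | hg) r hr
    · obtain ⟨s', hs', h⟩ := hS.2 r g hg hr
      exact ⟨s', mem_left hs', h⟩
    · obtain ⟨t', ht', h⟩ := hT.2 r g hg hr
      exact ⟨t', mem_right ht', h⟩

namespace IsLeftLocalization

variable {Q : Type*} [Ring Q] {f : R →+* Q}

theorem one_ne_zero (hf : IsLeftLocalization R S f) (hS : (0 : R) ∉ S) : (1 : Q) ≠ 0 := by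
  intro h
  obtain ⟨s, hs, hs0⟩ := (hf.2.2 1).mp (by rw [map_one, h])
  rw [mul_one] at hs0
  exact hS (hs0 ▸ hs)

theorem closure_union_le_comap_nonZeroDivisorsRight (hf : IsLeftLocalization R S f)
    (hT : ∀ t ∈ T, f t ∈ nonZeroDivisorsRight Q) :
    Submonoid.closure (S ∪ T) ≤ (nonZeroDivisorsRight Q).comap f :=
  Submonoid.closure_le.mpr <|
    Set.union_subset (fun s hs => (hf.1 s hs).mem_nonZeroDivisors.2) hT

theorem zero_notMem_closure_union (hf : IsLeftLocalization R S f) (hS : (0 : R) ∉ S)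
    (hT : ∀ t ∈ T, f t ∈ nonZeroDivisorsRight Q) :
    (0 : R) ∉ Submonoid.closure (S ∪ T) := fun h0 =>
  hf.one_ne_zero hS <| by
    simpa using hf.closure_union_le_comap_nonZeroDivisorsRight hT h0 1

end IsLeftLocalization

theorem stmt13.{u} (R : Type u) [Ring R] (T : Set R) (hT : IsLeftDenSet R T)
    (hreg : ∀ t ∈ T, ∀ S : Set R, IsMaxLeftDenSet R S →
      ∀ (Q : Type u) [Ring Q] (f : R →+* Q), IsLeftLocalization R S f →
        ∀ q : Q, q * f t = 0 → q = 0) :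
    ∀ S : Set R, IsMaxLeftDenSet R S → T ⊆ S := by
  intro S hS t ht
  obtain ⟨Q, _, f, hf⟩ := hS.1.exists_isLeftLocalization
  have h0 : (0 : R) ∉ Submonoid.closure (S ∪ T) :=
    hf.zero_notMem_closure_union hS.1.1.2.1 fun t ht => hreg t ht S hS Q f hf
  have hST : (Submonoid.closure (S ∪ T) : Set R) = S :=
    hS.2 _ (hS.1.closure_union hT h0) fun _ hs => Submonoid.subset_closure (Or.inl hs)
  exact hST ▸ Submonoid.subset_closure (Or.inr ht)
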